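/- Assume statements (A) and (B) both hold. Then statement (**) holds: for any family F ⊆ (ω₂ → ω₂) of injective functions with |F| ≤ ω₂, there exists an injective function h : ω₂ → ω₂ such that for any f ∈ F there exists a countable set D ⊆ ω₂ such that (i) for all α ∈ ω₂ \ D, f(α) ≠ h(α), and (ii) for all distinct α, β ∈ ω₂ \ D, f(h(α)) ≠ h(β). -/

import Mathlib

noncomputable section

abbrev Ordi : Type 1 := Ordinal.{0}

/-- The ordinal `ω₁`. -/
def w1 : Ordi := (Cardinal.aleph 1).ord

/-- The ordinal `ω₂`. -/
def w2 : Ordi := (Cardinal.aleph 2).ord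

/-- `C` is a club (closed and unbounded) subset of `κ`. -/
def IsClubIn (C : Set Ordi) (κ : Ordi) : Prop :=
  C ⊆ Set.Iio κ ∧ (∀ α < κ, ∃ β ∈ C, α ≤ β) ∧
    ∀ α, 0 < α → α < κ → (∀ β < α, ∃ γ ∈ C, β < γ ∧ γ < α) → α ∈ C

/-- `S` is a stationary subset of `κ`: it meets every club subset of `κ`. -/
def IsStationaryIn (S : Set Ordi) (κ : Ordi) : Prop :=
  S ⊆ Set.Iio κ ∧ ∀ C : Set Ordi, IsClubIn C κ → (S ∩ C).Nonempty

/-- `S²₁`: the set of ordinals below `ω₂` of cofinality `ω₁`. -/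
def S21 : Set Ordi := {α | α < w2 ∧ Ordinal.cof α = Cardinal.aleph 1}

/-- Statement (A): any family of at most `ω₂`-many club subsets of `ω₁` can be
diagonalized. -/
def StatementA : Prop :=
  ∀ 𝒞 : Set (Set Ordi), (∀ C ∈ 𝒞, IsClubIn C w1) →
    Cardinal.mk ↥𝒞 ≤ Cardinal.aleph 2 →
    ∃ E : Set Ordi, IsClubIn E w1 ∧ ∀ C ∈ 𝒞, (E \ C).Countable

/-- Statement (B): there is a sequence `⟨π_β : ω₁ ≤ β < ω₂⟩` of bijections
`π_β : β → ω₁` such that for every `g : ω₁ → ω₁` there are an injective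
`h : ω₂ → ω₂` and a stationary set `I ⊆ S²₁` of ordinals closed under `h`
with the stated oscillation properties. -/
def StatementB : Prop :=
  ∃ pi : Ordi → Ordi → Ordi,
    (∀ β, w1 ≤ β → β < w2 → Set.BijOn (pi β) (Set.Iio β) (Set.Iio w1)) ∧
    ∀ g : Ordi → Ordi, (∀ i < w1, g i < w1) →
      ∃ h : Ordi → Ordi, Set.InjOn h (Set.Iio w2) ∧ (∀ α < w2, h α < w2) ∧
        ∃ I : Set Ordi, I ⊆ S21 ∧ IsStationaryIn I w2 ∧
          (∀ β ∈ I, ∀ α < β, h α < β) ∧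
          ∀ β ∈ I, ∃ D : Set Ordi, D ⊆ Set.Iio β ∧ D.Countable ∧
            (∀ α < β, α ∉ D →
              g (min (pi β α) (pi β (h α))) < max (pi β α) (pi β (h α))) ∧
            (∀ α < β, α ∉ D → ∀ γ < β, γ ∉ D → α ≠ γ →
              g (min (pi β (h α)) (pi β (h γ))) < max (pi β (h α)) (pi β (h γ)))

/-- Statement (**): for any family `F` of at most `ω₂`-many injective functions
from `ω₂` to `ω₂` there is an injective `h : ω₂ → ω₂` such that for every
`f ∈ F` there is a countable `D ⊆ ω₂` with `f(α) ≠ h(α)` off `D` and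
`f(h(α)) ≠ h(β)` for distinct `α, β` off `D`. -/
def StatementSS : Prop :=
  ∀ F : Set (Ordi → Ordi),
    (∀ f ∈ F, Set.InjOn f (Set.Iio w2) ∧ ∀ α < w2, f α < w2) →
    Cardinal.mk ↥F ≤ Cardinal.aleph 2 →
    ∃ h : Ordi → Ordi, Set.InjOn h (Set.Iio w2) ∧ (∀ α < w2, h α < w2) ∧
      ∀ f ∈ F, ∃ D : Set Ordi, D ⊆ Set.Iio w2 ∧ D.Countable ∧
        (∀ α < w2, α ∉ D → f α ≠ h α) ∧
        (∀ α < w2, α ∉ D → ∀ β < w2, β ∉ D → α ≠ β → f (h α) ≠ h β)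

/-!
For `f ∈ F` and `ω₁ ≤ β < ω₂`, transport the graph of `f` below `β` to `ω₁` along `π_β`; its
closure points form a club `C f β`. Statement (A) gives a club `E` that is almost contained in all
of these, and (B) is applied to a `g` sending each `ξ < ω₁` to a point of `E` above `ξ`. If `f`
agreed with `h`, or `f ∘ h` with `h` off the diagonal, on an uncountable set, an uncountable part of
it would lie below some `β` of the stationary set `I`. For all but countably many of its points `g`
sends both ends `π_β u`, `π_β (f u)` of the corresponding transported edge into `C f β`, and a
closure point above one end lies above the other, contradicting `g (min) < max`.
-/

open Cardinal Ordinal Set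

lemma isSuccLimit_w1 : Order.IsSuccLimit w1 := isSuccLimit_ord (aleph0_le_aleph 1)

lemma isSuccLimit_w2 : Order.IsSuccLimit w2 := isSuccLimit_ord (aleph0_le_aleph 2)

lemma mk_Iio_w2 : #(Iio w2) = ℵ_ 2 := by
  rw [Cardinal.mk_Iio_ordinal, w2, card_ord, lift_aleph]
  simp

lemma countable_Iio_of_lt_w1 {e : Ordi} (he : e < w1) : (Iio e).Countable := by
  rw [← le_aleph0_iff_set_countable, Cardinal.mk_Iio_ordinal, lift_le_aleph0, ← lt_aleph_one_iff,
    ← lt_ord]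
  exact he

lemma exists_forall_lt_of_mk_lt_cof {s : Set Ordinal.{u}} {a : Ordinal.{u}}
    (ha : #s < (Ordinal.lift.{u + 1} a).cof) (hs : ∀ i ∈ s, i < a) : ∃ b < a, ∀ i ∈ s, i < b :=
  ⟨sSup ((· + 1) '' s), sSup_add_one_lt_of_lt_cof ha hs, fun i hi =>
    (Order.lt_add_one_iff.2 le_rfl).trans_le
      (le_csSup ⟨a, by rintro _ ⟨j, hj, rfl⟩; exact Order.add_one_le_iff.2 (hs j hj)⟩ ⟨i, hi, rfl⟩)⟩

lemma Set.Countable.exists_forall_lt_w1 {s : Set Ordi} (hs : s.Countable) (h : ∀ i ∈ s, i < w1) :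
    ∃ b < w1, ∀ i ∈ s, i < b := by
  refine exists_forall_lt_of_mk_lt_cof ?_ h
  rw [← lift_cof, w1, isRegular_aleph_one.cof_ord, lift_aleph, Ordinal.lift_one, lt_aleph_one_iff]
  exact le_aleph0_iff_set_countable.2 hs

lemma isRegular_aleph_two : (ℵ_ 2).IsRegular := by
  simpa [one_add_one_eq_two] using isRegular_aleph_add_one 1

lemma exists_forall_lt_w2 {s : Set Ordi} (hs : #s ≤ ℵ_ 1) (h : ∀ i ∈ s, i < w2) :
    ∃ b < w2, ∀ i ∈ s, i < b := by
  refine exists_forall_lt_of_mk_lt_cof ?_ h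
  rw [← lift_cof, w2, isRegular_aleph_two.cof_ord, lift_aleph, Ordinal.lift_ofNat]
  exact hs.trans_lt (aleph_lt_aleph.2 one_lt_two)

lemma IsClubIn.exists_lt_mem {E : Set Ordi} {κ : Ordi} (hκ : Order.IsSuccLimit κ)
    (hE : IsClubIn E κ) : ∃ g : Ordi → Ordi, ∀ ξ < κ, ξ < g ξ ∧ g ξ ∈ E := by
  have (ξ : Ordi) (hξ : ξ < κ) : ∃ e, ξ < e ∧ e ∈ E := by
    obtain ⟨e, he, hle⟩ := hE.2.1 (ξ + 1) (hκ.add_one_lt hξ)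
    exact ⟨e, (Order.lt_add_one_iff.2 le_rfl).trans_le hle, he⟩
  choose! g hg using this
  exact ⟨g, hg⟩

lemma isClubIn_Ioo {σ κ : Ordi} (hκ : Order.IsSuccLimit κ) (hσ : σ < κ) :
    IsClubIn (Ioo σ κ) κ := by
  refine ⟨fun x hx => hx.2, fun α hα => ⟨max (σ + 1) α, ⟨?_, ?_⟩, le_max_right _ _⟩, ?_⟩
  · exact (Order.lt_add_one_iff.2 le_rfl).trans_le (le_max_left _ _)
  · exact max_lt (hκ.add_one_lt hσ) hα
  · intro α h0 hα hacc
    obtain ⟨γ, hγ, -, hγα⟩ := hacc 0 h0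
    exact ⟨hγ.1.trans hγα, hα⟩

def closurePoints (R : Ordi → Ordi → Prop) : Set Ordi :=
  {δ | δ < w1 ∧ ∀ ξ < δ, ∀ η, R ξ η → η < δ}

lemma exists_closurePoint_step {R : Ordi → Ordi → Prop} (hR : ∀ ξ < w1, {η | R ξ η}.Countable)
    (hRw1 : ∀ ξ η, R ξ η → η < w1) {γ : Ordi} (hγ : γ < w1) :
    ∃ γ' < w1, ∀ ξ < γ, ∀ η, R ξ η → η < γ' := by
  obtain ⟨γ', hγ', hlt⟩ := ((countable_Iio_of_lt_w1 hγ).biUnion fun ξ hξ =>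
    hR ξ (lt_trans hξ hγ)).exists_forall_lt_w1 fun η hη => by
      obtain ⟨ξ, -, hξη⟩ := mem_iUnion₂.1 hη
      exact hRw1 ξ η hξη
  exact ⟨γ', hγ', fun ξ hξ η hξη => hlt η (mem_iUnion₂.2 ⟨ξ, hξ, hξη⟩)⟩

lemma isClubIn_closurePoints {R : Ordi → Ordi → Prop} (hR : ∀ ξ < w1, {η | R ξ η}.Countable)
    (hRw1 : ∀ ξ η, R ξ η → η < w1) : IsClubIn (closurePoints R) w1 := by
  refine ⟨fun δ hδ => hδ.1, fun α hα => ?_, ?_⟩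
  · choose! next hnext using fun γ (hγ : γ < w1) => exists_closurePoint_step hR hRw1 hγ
    have hlt (n : ℕ) : next^[n] α < w1 := by
      induction n with
      | zero => exact hα
      | succ n ih => rw [Function.iterate_succ_apply']; exact (hnext _ ih).1
    refine ⟨⨆ n, next^[n] α, ⟨?_, fun ξ hξ η hξη => ?_⟩, Ordinal.le_iSup (fun n => next^[n] α) 0⟩
    · rw [w1, ord_aleph] at hlt ⊢
      exact Ordinal.iSup_lt_omega_one hlt
    · obtain ⟨n, hn⟩ := Ordinal.lt_iSup_iff.1 hξ
      calc η < next^[n + 1] α := by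
            rw [Function.iterate_succ_apply']; exact (hnext _ (hlt n)).2 ξ hn η hξη
        _ ≤ ⨆ n, next^[n] α := Ordinal.le_iSup (fun n => next^[n] α) (n + 1)
  · intro α _ hα hacc
    refine ⟨hα, fun ξ hξ η hξη => ?_⟩
    obtain ⟨γ, hγ, hξγ, hγα⟩ := hacc ξ hξ
    exact (hγ.2 ξ hξγ η hξη).trans hγα

def Oscillates (g : Ordi → Ordi) (x y : Ordi) : Prop :=
  g (min x y) < max x y

lemma not_oscillates_of_mem_closurePoints {R : Ordi → Ordi → Prop} {g : Ordi → Ordi} {x y : Ordi}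
    (hxy : R x y) (hyx : R y x) (hx : x < g x) (hy : y < g y)
    (hgx : g x ∈ closurePoints R) (hgy : g y ∈ closurePoints R) : ¬ Oscillates g x y := by
  unfold Oscillates
  rcases le_total x y with h | h
  · rw [min_eq_left h, max_eq_right h]
    exact (hgx.2 x hx y hxy).not_gt
  · rw [min_eq_right h, max_eq_left h]
    exact (hgy.2 y hy x hyx).not_gt

def transportedGraph (π f : Ordi → Ordi) (β ξ η : Ordi) : Prop :=
  ∃ u < β, ∃ v < β, (f u = v ∨ f v = u) ∧ π u = ξ ∧ π v = η

section transportedGraph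

variable {π f : Ordi → Ordi} {β : Ordi}

lemma transportedGraph_of_apply_eq {u v : Ordi} (hu : u < β) (hv : v < β) (huv : f u = v) :
    transportedGraph π f β (π u) (π v) ∧ transportedGraph π f β (π v) (π u) :=
  ⟨⟨u, hu, v, hv, .inl huv, rfl, rfl⟩, ⟨v, hv, u, hu, .inr huv, rfl, rfl⟩⟩

lemma countable_setOf_transportedGraph (hπ : InjOn π (Iio β)) (hf : InjOn f (Iio β)) (ξ : Ordi) :
    {η | transportedGraph π f β ξ η}.Countable := by
  set A := {u | u < β ∧ π u = ξ}
  have hA : A.Subsingleton := fun u hu u' hu' => hπ hu.1 hu'.1 (hu.2.trans hu'.2.symm)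
  have hA' : {v | v < β ∧ f v ∈ A}.Subsingleton := fun v hv v' hv' =>
    hf hv.1 hv'.1 (hA hv.2 hv'.2)
  refine (((hA.image f).countable.union hA'.countable).image π).mono ?_
  rintro _ ⟨u, hu, v, hv, huv | hvu, rfl, rfl⟩
  · exact ⟨v, .inl ⟨u, ⟨hu, rfl⟩, huv⟩, rfl⟩
  · exact ⟨v, .inr ⟨hv, hvu ▸ ⟨hu, rfl⟩⟩, rfl⟩

lemma isClubIn_closurePoints_transportedGraph (hπ : BijOn π (Iio β) (Iio w1))
    (hf : InjOn f (Iio β)) : IsClubIn (closurePoints (transportedGraph π f β)) w1 :=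
  isClubIn_closurePoints (fun ξ _ => countable_setOf_transportedGraph hπ.injOn hf ξ)
    fun _ _ ⟨_, _, _, hv, _, _, hη⟩ => hη ▸ hπ.mapsTo hv

end transportedGraph

lemma countable_setOf_notMem_of_countable_diff {E C : Set Ordi} {g : Ordi → Ordi}
    (hE : E ⊆ Iio w1) (hg : ∀ ξ < w1, ξ < g ξ ∧ g ξ ∈ E) (hEC : (E \ C).Countable) :
    {ξ | ξ < w1 ∧ g ξ ∉ C}.Countable :=
  (hEC.biUnion fun _ he => countable_Iio_of_lt_w1 (hE he.1)).mono fun ξ hξ =>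
    mem_biUnion (show g ξ ∈ E \ C from ⟨(hg ξ hξ.1).2, hξ.2⟩) (hg ξ hξ.1).1

lemma w1_le_of_mem_S21 {β : Ordi} (hβ : β ∈ S21) : w1 ≤ β := by
  rw [w1, ord_le, ← hβ.2]
  exact cof_le_card β

lemma IsStationaryIn.exists_uncountable_subset_forall_lt {I T : Set Ordi} (hI : IsStationaryIn I w2)
    (hT : ¬ T.Countable) {q : Ordi → Ordi} (hq : ∀ α ∈ T, α < w2 ∧ q α < w2) :
    ∃ β ∈ I, ∃ T' ⊆ T, ¬ T'.Countable ∧ ∀ α ∈ T', α < β ∧ q α < β := by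
  rw [← le_aleph0_iff_set_countable, ← lt_aleph_one_iff, not_lt] at hT
  obtain ⟨T', hT'T, hT'⟩ := le_mk_iff_exists_subset.1 hT
  obtain ⟨σ, hσ, hσT'⟩ := exists_forall_lt_w2 (s := T' ∪ q '' T') (by
      calc #(T' ∪ q '' T' : Set Ordi) ≤ #T' + #T' :=
            (mk_union_le _ _).trans (add_le_add_right mk_image_le _)
        _ = ℵ_ 1 := by rw [hT', add_eq_self (aleph0_le_aleph 1)])
    (by rintro _ (hα | ⟨α, hα, rfl⟩) <;> simp only [hq _ (hT'T hα)])
  obtain ⟨β, hβI, hσβ, -⟩ := hI.2 _ (isClubIn_Ioo isSuccLimit_w2 hσ)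
  refine ⟨β, hβI, T', hT'T, ?_, fun α hα => ⟨?_, ?_⟩⟩
  · rw [← le_aleph0_iff_set_countable, hT', ← lt_aleph_one_iff, not_lt]
  · exact (hσT' α (.inl hα)).trans hσβ
  · exact (hσT' (q α) (.inr ⟨α, hα, rfl⟩)).trans hσβ

lemma exists_not_oscillates {π f g U V : Ordi → Ordi} {β : Ordi} {T D : Set Ordi}
    (hπ : BijOn π (Iio β) (Iio w1)) (hg : ∀ ξ < w1, ξ < g ξ)
    (hbad : {ξ | ξ < w1 ∧ g ξ ∉ closurePoints (transportedGraph π f β)}.Countable)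
    (hT : ¬ T.Countable) (hD : D.Countable) (hU : MapsTo U T (Iio β)) (hV : MapsTo V T (Iio β))
    (hUi : InjOn U T) (hVi : InjOn V T) (hUV : ∀ α ∈ T, f (U α) = V α) :
    ∃ α ∈ T, α ∉ D ∧ ¬ Oscillates g (π (U α)) (π (V α)) := by
  set C := closurePoints (transportedGraph π f β)
  have countable_bad (W : Ordi → Ordi) (hW : MapsTo W T (Iio β)) (hWi : InjOn W T) :
      {α ∈ T | g (π (W α)) ∉ C}.Countable :=
    MapsTo.countable_of_injOn (f := π ∘ W) (t := {ξ | ξ < w1 ∧ g ξ ∉ C})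
      (fun α hα => ⟨hπ.mapsTo (hW hα.1), hα.2⟩)
      ((hπ.injOn.comp hWi hW).mono (sep_subset _ _)) hbad
  obtain ⟨α, hαT, hα⟩ :
      (T \ (D ∪ {α ∈ T | g (π (U α)) ∉ C} ∪ {α ∈ T | g (π (V α)) ∉ C})).Nonempty :=
    sdiff_nonempty.2 fun h => hT (((hD.union (countable_bad U hU hUi)).union
      (countable_bad V hV hVi)).mono h)
  simp only [mem_union, mem_sep_iff, not_or, not_and, not_not] at hα
  obtain ⟨hUV, hVU⟩ := transportedGraph_of_apply_eq (π := π) (hU hαT) (hV hαT) (hUV α hαT)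
  exact ⟨α, hαT, hα.1.1, not_oscillates_of_mem_closurePoints hUV hVU
    (hg _ (hπ.mapsTo (hU hαT))) (hg _ (hπ.mapsTo (hV hαT))) (hα.1.2 hαT) (hα.2 hαT)⟩

section CountableExceptions

variable {pi : Ordi → Ordi → Ordi} {f g h : Ordi → Ordi} {I : Set Ordi}

lemma countable_setOf_apply_eq (hI : IsStationaryIn I w2)
    (hpi : ∀ β ∈ I, BijOn (pi β) (Iio β) (Iio w1)) (hg : ∀ ξ < w1, ξ < g ξ)
    (hbad : ∀ β ∈ I, {ξ | ξ < w1 ∧ g ξ ∉ closurePoints (transportedGraph (pi β) f β)}.Countable)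
    (hh : InjOn h (Iio w2)) (hIh : ∀ β ∈ I, ∀ α < β, h α < β)
    (hosc : ∀ β ∈ I, ∃ D : Set Ordi, D.Countable ∧
      ∀ α < β, α ∉ D → Oscillates g (pi β α) (pi β (h α))) :
    {α | α < w2 ∧ f α = h α}.Countable := by
  by_contra hQ
  obtain ⟨β, hβI, T, hTQ, hT, hTβ⟩ :=
    hI.exists_uncountable_subset_forall_lt hQ (q := id) fun α hα => ⟨hα.1, hα.1⟩
  obtain ⟨D, hD, hDosc⟩ := hosc β hβI
  obtain ⟨α, hαT, hαD, hα⟩ := exists_not_oscillates (U := id) (V := h) (hpi β hβI) hg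
    (hbad β hβI) hT hD (fun α hα => (hTβ α hα).1) (fun α hα => hIh β hβI α (hTβ α hα).1)
    (injOn_id T) (hh.mono fun α hα => (hTQ hα).1) (fun α hα => (hTQ hα).2)
  exact hα (hDosc α (hTβ α hαT).1 hαD)

lemma countable_setOf_apply_apply_eq (hI : IsStationaryIn I w2)
    (hpi : ∀ β ∈ I, BijOn (pi β) (Iio β) (Iio w1)) (hg : ∀ ξ < w1, ξ < g ξ)
    (hbad : ∀ β ∈ I, {ξ | ξ < w1 ∧ g ξ ∉ closurePoints (transportedGraph (pi β) f β)}.Countable)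
    (hf : InjOn f (Iio w2)) (hh : InjOn h (Iio w2)) (hhw2 : ∀ α < w2, h α < w2)
    (hIh : ∀ β ∈ I, ∀ α < β, h α < β)
    (hosc : ∀ β ∈ I, ∃ D : Set Ordi, D.Countable ∧ ∀ α < β, α ∉ D → ∀ γ < β, γ ∉ D → α ≠ γ →
      Oscillates g (pi β (h α)) (pi β (h γ))) :
    {α | α < w2 ∧ ∃ γ < w2, γ ≠ α ∧ f (h α) = h γ}.Countable := by
  set P := {α | α < w2 ∧ ∃ γ < w2, γ ≠ α ∧ f (h α) = h γ}
  choose! p hp using fun α (hα : α ∈ P) => hα.2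
  have hpP : InjOn p P := fun x hx y hy hxy => hh hx.1 hy.1 <|
    hf (hhw2 x hx.1) (hhw2 y hy.1) (by rw [(hp x hx).2.2, (hp y hy).2.2, hxy])
  by_contra hP
  obtain ⟨β, hβI, T, hTP, hT, hTβ⟩ :=
    hI.exists_uncountable_subset_forall_lt hP fun α hα => ⟨hα.1, (hp α hα).1⟩
  have hpT : InjOn p T := hpP.mono hTP
  obtain ⟨D, hD, hDosc⟩ := hosc β hβI
  obtain ⟨α, hαT, hαD, hα⟩ := exists_not_oscillates (U := h) (V := h ∘ p)
    (D := D ∪ {α ∈ T | p α ∈ D}) (hpi β hβI) hg (hbad β hβI) hT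
    (hD.union (MapsTo.countable_of_injOn (fun α hα => hα.2) (hpT.mono (sep_subset _ _)) hD))
    (fun α hα => hIh β hβI α (hTβ α hα).1) (fun α hα => hIh β hβI _ (hTβ α hα).2)
    (hh.mono fun α hα => (hTP hα).1) (hh.comp hpT fun α hα => (hp α (hTP hα)).1)
    (fun α hα => (hp α (hTP hα)).2.2)
  rw [mem_union, not_or] at hαD
  exact hα (hDosc α (hTβ α hαT).1 hαD.1 (p α) (hTβ α hαT).2 (fun hpα => hαD.2 ⟨hαT, hpα⟩)
    (hp α (hTP hαT)).2.1.symm)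

end CountableExceptions

def transportedClubs (pi : Ordi → Ordi → Ordi) (F : Set (Ordi → Ordi)) : Set (Set Ordi) :=
  range fun p : F × Ico w1 w2 => closurePoints (transportedGraph (pi p.2) p.1 p.2)

lemma mk_transportedClubs_le {pi : Ordi → Ordi → Ordi} {F : Set (Ordi → Ordi)} (hF : #F ≤ ℵ_ 2) :
    #(transportedClubs pi F) ≤ ℵ_ 2 := by
  refine mk_range_le.trans ?_
  calc #(F × Ico w1 w2) = #F * #(Ico w1 w2) := by
        rw [mk_prod, Cardinal.lift_id, Cardinal.lift_id]
    _ ≤ ℵ_ 2 * ℵ_ 2 := mul_le_mul' hF (mk_Iio_w2 ▸ mk_le_mk_of_subset Ico_subset_Iio_self)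
    _ = ℵ_ 2 := mul_eq_self (aleph0_le_aleph 2)

lemma isClubIn_of_mem_transportedClubs {pi : Ordi → Ordi → Ordi} {F : Set (Ordi → Ordi)}
    (hpi : ∀ β, w1 ≤ β → β < w2 → BijOn (pi β) (Iio β) (Iio w1))
    (hF : ∀ f ∈ F, InjOn f (Iio w2)) : ∀ C ∈ transportedClubs pi F, IsClubIn C w1 := by
  rintro _ ⟨⟨⟨f, hf⟩, β, hβ1, hβ2⟩, rfl⟩
  exact isClubIn_closurePoints_transportedGraph (hpi β hβ1 hβ2)
    ((hF f hf).mono (Iio_subset_Iio hβ2.le))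

/-- Statements (A) and (B) together imply statement (**). -/
theorem statementA_and_B_implies_starstar (hA : StatementA) (hB : StatementB) :
    StatementSS := by
  obtain ⟨pi, hpi, hB⟩ := hB
  intro F hF hFcard
  obtain ⟨E, hE, hEC⟩ := hA (transportedClubs pi F)
    (isClubIn_of_mem_transportedClubs hpi fun f hf => (hF f hf).1) (mk_transportedClubs_le hFcard)
  obtain ⟨g, hg⟩ := hE.exists_lt_mem isSuccLimit_w1
  obtain ⟨h, hh, hhw2, I, hIS, hI, hIh, hosc⟩ := hB g fun ξ hξ => hE.1 (hg ξ hξ).2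
  have hpiI (β) (hβ : β ∈ I) : BijOn (pi β) (Iio β) (Iio w1) :=
    hpi β (w1_le_of_mem_S21 (hIS hβ)) (hIS hβ).1
  have hg_gt (ξ) (hξ : ξ < w1) : ξ < g ξ := (hg ξ hξ).1
  refine ⟨h, hh, hhw2, fun f hf => ?_⟩
  have hbad (β) (hβ : β ∈ I) :
      {ξ | ξ < w1 ∧ g ξ ∉ closurePoints (transportedGraph (pi β) f β)}.Countable :=
    countable_setOf_notMem_of_countable_diff hE.1 hg
      (hEC _ ⟨(⟨f, hf⟩, ⟨β, w1_le_of_mem_S21 (hIS hβ), (hIS hβ).1⟩), rfl⟩)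
  have hQ := countable_setOf_apply_eq hI hpiI hg_gt hbad hh hIh fun β hβ => by
    obtain ⟨D, -, hD, hosc₁, -⟩ := hosc β hβ
    exact ⟨D, hD, hosc₁⟩
  have hP := countable_setOf_apply_apply_eq hI hpiI hg_gt hbad (hF f hf).1 hh hhw2 hIh fun β hβ => by
    obtain ⟨D, -, hD, -, hosc₂⟩ := hosc β hβ
    exact ⟨D, hD, hosc₂⟩
  exact ⟨_, union_subset (fun α hα => hα.1) (fun α hα => hα.1), hQ.union hP,
    fun α hα hαD heq => hαD (.inl ⟨hα, heq⟩),
    fun α hα hαD γ hγ _ hne heq => hαD (.inr ⟨hα, γ, hγ, hne.symm, heq⟩)⟩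

end
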